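/- Let p be a prime, A = W(𝔽̄_p)((h))^∧_p, and let α* ∈ A be the unique root of w(h,α) = (α - p)(α + (-1)^p)^p - (h - p² + (-1)^p)α. With w_i and d_{i,τ} defined as in the power operation formula (w₁ = -h, w_{p+1} = 1, w_i = (-1)^{p(p-i+1)}[C(p,i-1)+(-1)^{p+1}pC(p,i)] otherwise), define ψ(h) = α* + Σ_{i=0}^{p} (α*)^i Σ_{τ=1}^{p} w_{τ+1} d_{i,τ} ∈ A. Then ψ(h) ≡ h^p (mod p) in A. -/

import Mathlib

/-- `w_i = (-1)^{p(p-i+1)} [ C(p,i-1) + (-1)^{p+1} p · C(p,i) ]` (with `C(p,-1) = 0`). -/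
def wCoef (p i : ℕ) : ℤ :=
  (-1) ^ (p * (p + 1 - i)) *
    ((if i = 0 then 0 else (p.choose (i - 1) : ℤ)) + (-1) ^ (p + 1) * p * (p.choose i))

/-- `d_{i,τ} = Σ_{n=0}^{τ-1} (-1)^{τ-n} w₀^n
Σ_{m₁+⋯+m_{τ-n} = τ+i, 1 ≤ m_s ≤ p+1, m_{τ-n} ≥ i+1} w_{m₁} ⋯ w_{m_{τ-n}}`,
where the last-component condition is imposed on the index `s` with `s + 1 = τ - n`. -/
def dCoef {R : Type*} [CommRing R] (p : ℕ) (w : ℕ → R) (i τ : ℕ) : R :=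
  ∑ n ∈ Finset.range τ,
    (-1) ^ (τ - n) * w 0 ^ n *
      ∑ m ∈ (Fintype.piFinset fun _ : Fin (τ - n) => Finset.Icc 1 (p + 1)).filter
          (fun m => (∑ s, m s) = τ + i ∧ ∀ s : Fin (τ - n), (s : ℕ) + 1 = τ - n → i + 1 ≤ m s),
        ∏ s, w (m s)

/-- The Laurent series ring `W(𝔽̄_p)((h))` over the Witt vectors of `𝔽̄_p`. -/
noncomputable abbrev WLaurent (p : ℕ) [Fact p.Prime] :=
  LaurentSeries (WittVector p (AlgebraicClosure (ZMod p)))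

/-- `A = W(𝔽̄_p)((h))^∧_p`, the `p`-completion of `W(𝔽̄_p)((h))`. -/
noncomputable abbrev ACompl (p : ℕ) [Fact p.Prime] :=
  AdicCompletion (Ideal.span {(p : WLaurent p)}) (WLaurent p)

/-- The element `h` of `A`. -/
noncomputable def hElt (p : ℕ) [Fact p.Prime] : ACompl p :=
  algebraMap (WLaurent p) (ACompl p) (HahnSeries.single 1 1)

/-- The coefficients `w_i` as elements of `A`: `w₁ = -h` and otherwise the integer `w_i`
(note `w_{p+1} = 1` already). -/
noncomputable def wElt (p : ℕ) [Fact p.Prime] : ℕ → ACompl p := fun i =>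
  if i = 1 then -hElt p else (wCoef p i : ACompl p)

/-- `α` is a root of `w(h,α) = (α - p)(α + (-1)^p)^p - (h - p² + (-1)^p)α` in `A`. -/
def IsWRoot (p : ℕ) [Fact p.Prime] (α : ACompl p) : Prop :=
  (α - p) * (α + (-1) ^ p) ^ p - (hElt p - p ^ 2 + (-1) ^ p) * α = 0

/-!
Modulo `p` all `w_j` vanish except `w₁ = -h` and `w_{p+1} = 1`, and `α* ≡ 0`, so of `ψ(h)` only
`w_{p+1} d_{0,p} = (-1)^p w₁^p = h^p` survives. To see `α* ≡ 0`, reduce along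
`A → A/p ≅ 𝔽̄_p((h))`: there the equation `w(h, α) = 0` becomes `α (α^p - h) = 0` by Frobenius,
and `h` is not a `p`-th power in `𝔽̄_p((h))`.
-/

open Finset

theorem natCast_dvd_wCoef {p : ℕ} (hp : p.Prime) {j : ℕ} (hj1 : j ≠ 1) (hjp : j ≠ p + 1) :
    (p : ℤ) ∣ wCoef p j := by
  refine Dvd.dvd.mul_left (dvd_add ?_ ⟨(-1) ^ (p + 1) * (p.choose j : ℤ), by ring⟩) _
  rcases eq_or_ne j 0 with rfl | hj0
  · simp
  rw [if_neg hj0]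
  rcases lt_or_ge p (j - 1) with hlt | hle
  · simp [Nat.choose_eq_zero_of_lt hlt]
  · exact Int.natCast_dvd_natCast.2 (hp.dvd_choose_self (by omega) (by omega))

theorem wCoef_succ_self (p : ℕ) : wCoef p (p + 1) = 1 := by
  simp [wCoef]

section dCoef

variable {R S : Type*} [CommRing R] [CommRing S]

theorem map_dCoef (f : R →+* S) (p : ℕ) (w : ℕ → R) (i τ : ℕ) :
    f (dCoef p w i τ) = dCoef p (fun n => f (w n)) i τ := by
  simp [dCoef]

/-- Only the composition of `τ` into `τ` ones survives. -/
theorem dCoef_zero_of_apply_zero_eq_zero (p : ℕ) {w : ℕ → R} (hw0 : w 0 = 0) {τ : ℕ}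
    (hτ : 0 < τ) : dCoef p w 0 τ = (-1) ^ τ * w 1 ^ τ := by
  unfold dCoef
  rw [Finset.sum_eq_single_of_mem 0 (Finset.mem_range.2 hτ) fun n _ hn => by
    rw [hw0, zero_pow hn, mul_zero, zero_mul]]
  simp only [Nat.sub_zero, add_zero, zero_add, pow_zero, mul_one]
  have hones : ((Fintype.piFinset fun _ : Fin τ => Finset.Icc 1 (p + 1)).filter
      fun m => (∑ s, m s) = τ ∧ ∀ s : Fin τ, (s : ℕ) + 1 = τ → 1 ≤ m s) = {fun _ => 1} := by
    ext m
    simp only [Finset.mem_filter, Fintype.mem_piFinset, Finset.mem_Icc, Finset.mem_singleton]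
    constructor
    · rintro ⟨hm, hsum, -⟩
      have hsum' : ∑ s, m s = ∑ _s : Fin τ, 1 := by simp [hsum]
      funext s
      exact ((Finset.sum_eq_sum_iff_of_le fun s _ => (hm s).1).1 hsum'.symm s (mem_univ s)).symm
    · rintro rfl
      exact ⟨fun _ => ⟨le_rfl, Nat.le_add_left 1 p⟩, by simp, fun _ _ => le_rfl⟩
  simp [hones]

end dCoef

/-- The paper's `ψ(h)`, as a polynomial in the root `α` with coefficients built from `w`. -/
def psi {R : Type*} [CommRing R] (p : ℕ) (w : ℕ → R) (α : R) : R :=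
  α + ∑ i ∈ range (p + 1), α ^ i * ∑ τ ∈ Icc 1 p, w (τ + 1) * dCoef p w i τ

section psi

variable {R S : Type*} [CommRing R] [CommRing S]

theorem map_psi (f : R →+* S) (p : ℕ) (w : ℕ → R) (α : R) :
    f (psi p w α) = psi p (fun n => f (w n)) (f α) := by
  simp [psi, map_dCoef]

theorem psi_zero {p : ℕ} (hp : 0 < p) {w : ℕ → R} (hw : ∀ j, j ≠ 1 → j ≠ p + 1 → w j = 0)
    (hwp : w (p + 1) = 1) : psi p w 0 = (-w 1) ^ p := by
  have hτ : ∀ τ ∈ Icc 1 p, τ ≠ p → w (τ + 1) * dCoef p w 0 τ = 0 := fun τ hτ hτp => by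
    rw [hw (τ + 1) (by grind) (by omega), zero_mul]
  rw [psi, zero_add, Finset.sum_eq_single_of_mem 0 (by simp) fun i _ hi => by
      rw [zero_pow hi, zero_mul],
    pow_zero, one_mul, Finset.sum_eq_single_of_mem p (by simp; omega) hτ, hwp, one_mul,
    dCoef_zero_of_apply_zero_eq_zero p (hw 0 (by omega) (by omega)) hp, ← neg_pow]

end psi

namespace HahnSeries

variable {Γ : Type*} [AddCommMonoid Γ] [LinearOrder Γ] [IsOrderedCancelAddMonoid Γ]
  {R S : Type*} [CommRing R] [CommRing S]

noncomputable def mapRingHom (f : R →+* S) : HahnSeries Γ R →+* HahnSeries Γ S where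
  toFun x := x.map f
  map_zero' := by ext; simp
  map_one' := HahnSeries.map_one f.toMonoidWithZeroHom
  map_add' _ _ := HahnSeries.map_add (f : R →+ S)
  map_mul' _ _ := HahnSeries.map_mul (f : R →ₙ+* S)

@[simp]
theorem coeff_mapRingHom (f : R →+* S) (x : HahnSeries Γ R) (g : Γ) :
    (mapRingHom f x).coeff g = f (x.coeff g) := rfl

theorem mapRingHom_single (f : R →+* S) (a : Γ) (r : R) :
    mapRingHom f (single a r) = single a (f r) :=
  HahnSeries.map_single (f : R →+ S).toZeroHom

theorem C_dvd_of_forall_dvd_coeff {r : R} {x : HahnSeries Γ R} (h : ∀ g, r ∣ x.coeff g) :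
    C r ∣ x := by
  classical
  refine ⟨⟨fun g => if x.coeff g = 0 then 0 else (h g).choose,
    x.isPWO_support.mono fun g hg h0 => hg (if_pos h0)⟩, ?_⟩
  ext g
  rw [C_mul_eq_smul, coeff_smul, smul_eq_mul]
  change x.coeff g = r * if x.coeff g = 0 then 0 else (h g).choose
  split_ifs with h0
  · rw [h0, mul_zero]
  · exact (h g).choose_spec

end HahnSeries

theorem WittVector.natCast_dvd_of_mapRingHom_constantCoeff_eq_zero {p : ℕ} [Fact p.Prime]
    {k : Type*} [CommRing k] [CharP k p] [PerfectRing k p]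
    {Γ : Type*} [AddCommMonoid Γ] [LinearOrder Γ] [IsOrderedCancelAddMonoid Γ]
    {x : HahnSeries Γ (WittVector p k)} (hx : HahnSeries.mapRingHom constantCoeff x = 0) :
    (p : HahnSeries Γ (WittVector p k)) ∣ x := by
  have hcoeff : ∀ g, (p : WittVector p k) ∣ x.coeff g := fun g => by
    rw [← Ideal.mem_span_singleton, ← ker_constantCoeff, RingHom.mem_ker]
    simpa using congr(HahnSeries.coeff $hx g)
  simpa using HahnSeries.C_dvd_of_forall_dvd_coeff hcoeff

theorem LaurentSeries.pow_ne_single_one {R : Type*} [CommRing R] [IsDomain R] {n : ℕ}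
    (hn : n ≠ 1) (x : LaurentSeries R) : x ^ n ≠ HahnSeries.single 1 1 := by
  intro h
  have horder := congrArg HahnSeries.order h
  rw [HahnSeries.order_pow, HahnSeries.order_single one_ne_zero, nsmul_eq_mul] at horder
  exact hn (by exact_mod_cast Int.eq_one_of_mul_eq_one_right (Int.natCast_nonneg n) horder)

theorem wPolynomial_eq_of_charP {S : Type*} [CommRing S] {p : ℕ} [Fact p.Prime] [CharP S p]
    (a t : S) : (a - p) * (a + (-1) ^ p) ^ p - (t - p ^ 2 + (-1) ^ p) * a = a * (a ^ p - t) := by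
  rw [neg_one_pow_char, ← sub_eq_add_neg, sub_pow_char, one_pow, CharP.cast_eq_zero]
  ring

section Reduction

variable (p : ℕ) [Fact p.Prime] (k : Type*) [CommRing k] [CharP k p]

noncomputable def reductionModP :
    AdicCompletion (Ideal.span {(p : LaurentSeries (WittVector p k))})
      (LaurentSeries (WittVector p k)) →+* LaurentSeries k :=
  (Ideal.Quotient.lift _ (HahnSeries.mapRingHom WittVector.constantCoeff) fun a ha => by
    obtain ⟨c, rfl⟩ := Ideal.mem_span_singleton'.1 ha
    rw [map_mul, map_natCast, ← map_natCast HahnSeries.C, CharP.cast_eq_zero, map_zero,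
      mul_zero]).comp (AdicCompletion.evalOneₐ _).toRingHom

theorem reductionModP_algebraMap (x : LaurentSeries (WittVector p k)) :
    reductionModP p k (algebraMap _ _ x) = HahnSeries.mapRingHom WittVector.constantCoeff x :=
  rfl

theorem natCast_dvd_of_reductionModP_eq_zero [PerfectRing k p] {x : AdicCompletion
    (Ideal.span {(p : LaurentSeries (WittVector p k))}) (LaurentSeries (WittVector p k))}
    (hx : reductionModP p k x = 0) : (p : AdicCompletion _ _) ∣ x := by
  obtain ⟨a, ha⟩ := Ideal.Quotient.mk_surjective (AdicCompletion.evalOneₐ _ x)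
  have hpa : (p : LaurentSeries (WittVector p k)) ∣ a := by
    refine WittVector.natCast_dvd_of_mapRingHom_constantCoeff_eq_zero ?_
    rwa [reductionModP, RingHom.comp_apply, AlgHom.toRingHom_eq_coe, AlgHom.coe_toRingHom, ← ha,
      Ideal.Quotient.lift_mk] at hx
  have hker : x ∈ RingHom.ker (AdicCompletion.evalOneₐ _).toRingHom := by
    rwa [RingHom.mem_ker, AlgHom.toRingHom_eq_coe, AlgHom.coe_toRingHom, ← ha,
      Ideal.Quotient.eq_zero_iff_dvd]
  rwa [AdicCompletion.ker_evalOneₐ_eq_map _ (Submodule.fg_span_singleton _), Ideal.map_span,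
    Set.image_singleton, map_natCast, Ideal.mem_span_singleton] at hker

end Reduction

section ACompl

variable {p : ℕ} [Fact p.Prime]

theorem reductionModP_hElt : reductionModP p (AlgebraicClosure (ZMod p)) (hElt p) =
    HahnSeries.single 1 1 := by
  rw [hElt, reductionModP_algebraMap, HahnSeries.mapRingHom_single, map_one]

theorem natCast_dvd_of_isWRoot {α : ACompl p} (hα : IsWRoot p α) : (p : ACompl p) ∣ α := by
  have : CharP (LaurentSeries (AlgebraicClosure (ZMod p))) p :=
    charP_of_injective_ringHom HahnSeries.C_injective p
  refine natCast_dvd_of_reductionModP_eq_zero p (AlgebraicClosure (ZMod p)) ?_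
  have hred := congrArg (reductionModP p (AlgebraicClosure (ZMod p))) hα
  simp only [map_sub, map_mul, map_add, map_pow, map_natCast, map_neg, map_one, map_zero,
    reductionModP_hElt, wPolynomial_eq_of_charP, mul_eq_zero, sub_eq_zero] at hred
  exact hred.resolve_right (LaurentSeries.pow_ne_single_one (Fact.out : p.Prime).one_lt.ne' _)

theorem natCast_dvd_wElt {j : ℕ} (hj1 : j ≠ 1) (hjp : j ≠ p + 1) :
    (p : ACompl p) ∣ wElt p j := by
  rw [wElt, if_neg hj1]
  exact_mod_cast (Int.castRingHom (ACompl p)).map_dvd (natCast_dvd_wCoef Fact.out hj1 hjp)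

theorem wElt_succ_self : wElt p (p + 1) = 1 := by
  rw [wElt, if_neg (by have := (Fact.out : p.Prime).pos; omega), wCoef_succ_self, Int.cast_one]

end ACompl

/-- Frobenius congruence for the total power operation: for the (unique) root `α*` of
`w(h,·)` in `A`, `ψ(h) = α* + Σ_{i=0}^{p} (α*)^i Σ_{τ=1}^{p} w_{τ+1} d_{i,τ} ≡ h^p (mod p)`. -/
theorem stmt15 (p : ℕ) [Fact p.Prime] :
    ∀ α : ACompl p, IsWRoot p α →
      (p : ACompl p) ∣
        (α + ∑ i ∈ Finset.range (p + 1),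
            α ^ i * ∑ τ ∈ Finset.Icc 1 p, wElt p (τ + 1) * dCoef p (wElt p) i τ) -
          hElt p ^ p := by
  intro α hα
  let π := Ideal.Quotient.mk (Ideal.span {(p : ACompl p)})
  have hπ : ∀ {x}, (p : ACompl p) ∣ x → π x = 0 := Ideal.Quotient.eq_zero_iff_dvd _ _ |>.2
  rw [← Ideal.Quotient.eq_zero_iff_dvd, map_sub, sub_eq_zero]
  change π (psi p (wElt p) α) = π (hElt p ^ p)
  rw [map_psi, hπ (natCast_dvd_of_isWRoot hα),
    psi_zero (Fact.out : p.Prime).pos (fun j hj1 hjp => hπ (natCast_dvd_wElt hj1 hjp))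
      (by rw [wElt_succ_self, map_one]),
    wElt, if_pos rfl, map_neg, neg_neg, map_pow]
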